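/- Let V be a real inner product space with finite-dimensional subspace V_h, and let a : V × V → ℝ be a symmetric bilinear form with: a(u − u_h, w) = 0 for all w ∈ V_h; for every e ∈ V there exists φ ∈ V with a(φ, v) = ⟨e, v⟩ for all v ∈ V and an element φ_h ∈ V_h satisfying ‖φ − φ_h‖₊ ≤ C·h·‖e‖; and |a(v, w)| ≤ C_bnd‖v‖‖w‖₊ for v ∈ V, w ∈ V (for appropriate norms with ‖·‖ the inner product norm on the error and ‖·‖₊ an augmented norm). Then ‖u − u_h‖ ≤ C_bnd·C·h·|||u − u_h|||, where |||·||| is the energy norm controlling a in the first slot. -/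

import Mathlib

/-!
Testing the dual problem with `e = u - u_h` and subtracting `a(e, φ_h) = 0` (Galerkin
orthogonality) gives `‖e‖² = a(e, φ - φ_h) ≤ C_bnd |||e||| ‖φ - φ_h‖₊ ≤ C_bnd C h |||e||| ‖e‖`;
dividing by `‖e‖` is the estimate.
-/

lemma le_of_sq_le_mul_self {R : Type*} [Field R] [LinearOrder R] [IsStrictOrderedRing R]
    {x K : R} (hK : 0 ≤ K) (h : x ^ 2 ≤ K * x) : x ≤ K := by
  nlinarith

lemma norm_sq_eq_apply_sub_of_dual {V : Type*} [NormedAddCommGroup V] [InnerProductSpace ℝ V]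
    (a : V → V → ℝ) (ha : ∀ v w₁ w₂ : V, a v (w₁ + w₂) = a v w₁ + a v w₂)
    (hsymm : ∀ v w : V, a v w = a w v) {e φ ψ : V}
    (hφ : a φ e = inner ℝ e e) (hψ : a e ψ = 0) :
    ‖e‖ ^ 2 = a e (φ - ψ) := by
  have hsplit : a e φ = a e (φ - ψ) + a e ψ := by rw [← ha, sub_add_cancel]
  rw [← real_inner_self_eq_norm_sq, ← hφ, hsymm, hsplit, hψ, add_zero]

theorem abstract_aubin_nitsche_general
    {V : Type*} [NormedAddCommGroup V] [InnerProductSpace ℝ V]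
    (Vh : Submodule ℝ V)
    (a : V → V → ℝ)
    (ha : ∀ v w₁ w₂ : V, a v (w₁ + w₂) = a v w₁ + a v w₂)
    (hsymm : ∀ v w : V, a v w = a w v)
    (En Np : V → ℝ) (hEn : ∀ v, 0 ≤ En v)
    (C C_bnd h : ℝ) (hC : 0 < C) (hCb : 0 < C_bnd) (hh : 0 < h)
    (u u_h : V)
    (horth : ∀ w ∈ Vh, a (u - u_h) w = 0)
    (hdual : ∀ e : V, ∃ φ : V, (∀ v : V, a φ v = inner ℝ e v) ∧
      ∃ φ_h ∈ Vh, Np (φ - φ_h) ≤ C * h * ‖e‖)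
    (hbound : ∀ v w : V, |a v w| ≤ C_bnd * En v * Np w) :
    ‖u - u_h‖ ≤ C_bnd * C * h * En (u - u_h) := by
  set e := u - u_h
  obtain ⟨φ, hφ, φ_h, hφ_h, hφ_approx⟩ := hdual e
  have hEn_e := hEn e
  refine le_of_sq_le_mul_self (by positivity) ?_
  calc ‖e‖ ^ 2 = a e (φ - φ_h) :=
        norm_sq_eq_apply_sub_of_dual a ha hsymm (hφ e) (horth φ_h hφ_h)
    _ ≤ |a e (φ - φ_h)| := le_abs_self _
    _ ≤ C_bnd * En e * Np (φ - φ_h) := hbound _ _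
    _ ≤ C_bnd * En e * (C * h * ‖e‖) := by gcongr
    _ = C_bnd * C * h * En e * ‖e‖ := by ring

theorem abstract_aubin_nitsche
    {V : Type*} [NormedAddCommGroup V] [InnerProductSpace ℝ V]
    (Vh : Submodule ℝ V) [FiniteDimensional ℝ Vh]
    (a : V → V → ℝ)
    (ha : ∀ v w₁ w₂ : V, a v (w₁ + w₂) = a v w₁ + a v w₂)
    (ha' : ∀ v₁ v₂ w : V, a (v₁ + v₂) w = a v₁ w + a v₂ w)
    (hsymm : ∀ v w : V, a v w = a w v)
    (En Np : V → ℝ) (hEn : ∀ v, 0 ≤ En v) (hNp : ∀ v, 0 ≤ Np v)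
    (C C_bnd h : ℝ) (hC : 0 < C) (hCb : 0 < C_bnd) (hh : 0 < h)
    (u u_h : V) (hu_h : u_h ∈ Vh)
    (horth : ∀ w ∈ Vh, a (u - u_h) w = 0)
    (hdual : ∀ e : V, ∃ φ : V, (∀ v : V, a φ v = inner ℝ e v) ∧
      ∃ φ_h ∈ Vh, Np (φ - φ_h) ≤ C * h * ‖e‖)
    (hbound : ∀ v w : V, |a v w| ≤ C_bnd * En v * Np w) :
    ‖u - u_h‖ ≤ C_bnd * C * h * En (u - u_h) :=
  abstract_aubin_nitsche_general Vh a ha hsymm En Np hEn C C_bnd h hC hCb hh u u_h horth hdual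
    hbound
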